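/- arXiv:1705.08678 — 3 statements merged into one kernel-verified Lean document; each statement's English description precedes it below -/
import Mathlib

section
/- Let H be a symmetric positive definite block matrix with blocks A = ∇²_{aa}f, B = ∇²_{au}f, D = ∇²_{uu}f, and let S = A − B D^{-1} Bᵀ be the Schur complement of D. Then the condition number of S is at most the condition number of H: κ(S) ≤ κ(H). -/
/-!
In the Loewner order, `S = A - B D⁻¹ Bᴴ ≤ A`, and `A` is a compression of `H`, so
`S ≤ A ≤ λ_max(H) • 1`. Conversely `S = Qᴴ H Q` for `Q = [1; -D⁻¹ Bᴴ]`, and `Qᴴ Q ≥ 1`, so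
`λ_min(H) • 1 ≤ λ_min(H) • Qᴴ Q ≤ Qᴴ H Q = S`. Hence the spectrum of `S` lies in
`[λ_min(H), λ_max(H)]` with `λ_min(H) > 0`, and `κ(S) ≤ κ(H)`.
-/

open Matrix

open scoped MatrixOrder ComplexOrder

namespace Matrix

variable {𝕜 m n : Type*} [RCLike 𝕜]

lemma PosDef.toBlocks₂₂ {M : Matrix (m ⊕ n) (m ⊕ n) 𝕜} (hM : M.PosDef) : M.toBlocks₂₂.PosDef :=
  hM.submatrix Sum.inr_injective

variable [Fintype m] [Fintype n]

lemma conjTranspose_mul_mul_le_conjTranspose_mul_mul {M N : Matrix n n 𝕜} (h : M ≤ N)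
    (Q : Matrix n m 𝕜) : Qᴴ * M * Q ≤ Qᴴ * N * Q := by
  rw [le_iff, ← Matrix.sub_mul, ← Matrix.mul_sub]
  exact h.conjTranspose_mul_mul_same Q

variable [DecidableEq n]

lemma schurComplement_le {A : Matrix m m 𝕜} {B : Matrix m n 𝕜} {D : Matrix n n 𝕜}
    (hD : D.PosDef) : A - B * D⁻¹ * Bᴴ ≤ A := by
  rw [le_iff, sub_sub_cancel]
  exact hD.inv.posSemidef.mul_mul_conjTranspose_same B

namespace IsHermitian

variable {A : Matrix n n 𝕜}

noncomputable def conditionNumber (hA : A.IsHermitian) : ℝ :=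
  (⨆ i, hA.eigenvalues i) / ⨅ i, hA.eigenvalues i

lemma le_algebraMap_iff (hA : A.IsHermitian) {c : ℝ} :
    A ≤ algebraMap ℝ _ c ↔ ∀ i, hA.eigenvalues i ≤ c := by
  rw [le_algebraMap_iff_spectrum_le hA.isSelfAdjoint, hA.spectrum_real_eq_range_eigenvalues,
    Set.forall_mem_range]

lemma algebraMap_le_iff (hA : A.IsHermitian) {c : ℝ} :
    algebraMap ℝ _ c ≤ A ↔ ∀ i, c ≤ hA.eigenvalues i := by
  rw [algebraMap_le_iff_le_spectrum hA.isSelfAdjoint, hA.spectrum_real_eq_range_eigenvalues,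
    Set.forall_mem_range]

lemma le_algebraMap_iSup_eigenvalues (hA : A.IsHermitian) :
    A ≤ algebraMap ℝ _ (⨆ i, hA.eigenvalues i) :=
  hA.le_algebraMap_iff.mpr fun i ↦ le_ciSup (Set.finite_range _).bddAbove i

lemma algebraMap_iInf_eigenvalues_le (hA : A.IsHermitian) :
    algebraMap ℝ _ (⨅ i, hA.eigenvalues i) ≤ A :=
  hA.algebraMap_le_iff.mpr fun i ↦ ciInf_le (Set.finite_range _).bddBelow i

variable [Nonempty n]

lemma iSup_eigenvalues_le (hA : A.IsHermitian) {c : ℝ} (h : A ≤ algebraMap ℝ _ c) :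
    ⨆ i, hA.eigenvalues i ≤ c :=
  ciSup_le (hA.le_algebraMap_iff.mp h)

lemma le_iInf_eigenvalues (hA : A.IsHermitian) {c : ℝ} (h : algebraMap ℝ _ c ≤ A) :
    c ≤ ⨅ i, hA.eigenvalues i :=
  le_ciInf (hA.algebraMap_le_iff.mp h)

lemma iInf_eigenvalues_le_iSup_eigenvalues (hA : A.IsHermitian) :
    ⨅ i, hA.eigenvalues i ≤ ⨆ i, hA.eigenvalues i :=
  ciInf_le_ciSup (Set.finite_range _).bddBelow (Set.finite_range _).bddAbove

end IsHermitian

lemma PosDef.iInf_eigenvalues_pos [Nonempty n] {A : Matrix n n 𝕜} (hA : A.PosDef) :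
    0 < ⨅ i, hA.1.eigenvalues i := by
  obtain ⟨i, hi⟩ := exists_eq_ciInf_of_finite (f := hA.1.eigenvalues)
  exact hi ▸ hA.eigenvalues_pos i

variable [DecidableEq m]

lemma submatrix_algebraMap {e : m → n} (he : Function.Injective e) (c : ℝ) :
    (algebraMap ℝ (Matrix n n 𝕜) c).submatrix e e = algebraMap ℝ (Matrix m m 𝕜) c := by
  ext i j
  simp [Algebra.algebraMap_eq_smul_one, one_apply, he.eq_iff]

section SchurComplement

variable {A : Matrix m m 𝕜} {B : Matrix m n 𝕜} {D : Matrix n n 𝕜}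

lemma conjTranspose_mul_fromBlocks_mul_eq_schurComplement (hD : IsUnit D.det) :
    (fromRows (1 : Matrix m m 𝕜) (-(D⁻¹ * Bᴴ)))ᴴ * fromBlocks A B Bᴴ D *
      fromRows (1 : Matrix m m 𝕜) (-(D⁻¹ * Bᴴ)) = A - B * D⁻¹ * Bᴴ := by
  rw [Matrix.mul_assoc, fromBlocks_mul_fromRows, conjTranspose_fromRows_eq_fromCols_conjTranspose,
    fromCols_mul_fromRows]
  simp [Matrix.mul_neg, ← Matrix.mul_assoc, mul_nonsing_inv _ hD, sub_eq_add_neg]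

lemma schurComplement_le_algebraMap (hD : D.PosDef) {c : ℝ}
    (h : fromBlocks A B Bᴴ D ≤ algebraMap ℝ _ c) : A - B * D⁻¹ * Bᴴ ≤ algebraMap ℝ _ c := by
  refine (schurComplement_le hD).trans ?_
  rw [← submatrix_algebraMap (𝕜 := 𝕜) (Sum.inl_injective (β := n)) c]
  exact h.submatrix Sum.inl

lemma algebraMap_le_schurComplement (hD : D.PosDef) {c : ℝ} (hc : 0 ≤ c)
    (h : algebraMap ℝ _ c ≤ fromBlocks A B Bᴴ D) : algebraMap ℝ _ c ≤ A - B * D⁻¹ * Bᴴ := by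
  set Q : Matrix (m ⊕ n) m 𝕜 := fromRows 1 (-(D⁻¹ * Bᴴ))
  have hQ : Qᴴ * Q = 1 + (D⁻¹ * Bᴴ)ᴴ * (D⁻¹ * Bᴴ) := by
    simp [Q, conjTranspose_fromRows_eq_fromCols_conjTranspose, fromCols_mul_fromRows]
  calc algebraMap ℝ (Matrix m m 𝕜) c ≤ c • (Qᴴ * Q) := by
        rw [le_iff, hQ, Algebra.algebraMap_eq_smul_one, smul_add, add_sub_cancel_left]
        exact (posSemidef_conjTranspose_mul_self _).smul hc
    _ = Qᴴ * algebraMap ℝ (Matrix (m ⊕ n) (m ⊕ n) 𝕜) c * Q := by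
        simp [Algebra.algebraMap_eq_smul_one]
    _ ≤ Qᴴ * fromBlocks A B Bᴴ D * Q := conjTranspose_mul_mul_le_conjTranspose_mul_mul h Q
    _ = A - B * D⁻¹ * Bᴴ := conjTranspose_mul_fromBlocks_mul_eq_schurComplement
        ((isUnit_iff_isUnit_det D).mp hD.isUnit)

variable [Nonempty m]

lemma iSup_eigenvalues_schurComplement_le (hH : (fromBlocks A B Bᴴ D).PosDef)
    (hS : (A - B * D⁻¹ * Bᴴ).IsHermitian) :
    ⨆ i, hS.eigenvalues i ≤ ⨆ i, hH.1.eigenvalues i :=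
  hS.iSup_eigenvalues_le <|
    schurComplement_le_algebraMap hH.toBlocks₂₂ hH.1.le_algebraMap_iSup_eigenvalues

lemma iInf_eigenvalues_le_schurComplement (hH : (fromBlocks A B Bᴴ D).PosDef)
    (hS : (A - B * D⁻¹ * Bᴴ).IsHermitian) :
    ⨅ i, hH.1.eigenvalues i ≤ ⨅ i, hS.eigenvalues i :=
  hS.le_iInf_eigenvalues <| algebraMap_le_schurComplement hH.toBlocks₂₂
    hH.iInf_eigenvalues_pos.le hH.1.algebraMap_iInf_eigenvalues_le

theorem conditionNumber_schurComplement_le (hH : (fromBlocks A B Bᴴ D).PosDef)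
    (hS : (A - B * D⁻¹ * Bᴴ).IsHermitian) : hS.conditionNumber ≤ hH.1.conditionNumber :=
  div_le_div₀ (hH.iInf_eigenvalues_pos.le.trans hH.1.iInf_eigenvalues_le_iSup_eigenvalues)
    (iSup_eigenvalues_schurComplement_le hH hS) hH.iInf_eigenvalues_pos
    (iInf_eigenvalues_le_schurComplement hH hS)

end SchurComplement

end Matrix

theorem stmt3_general {l n : ℕ} (hl : 0 < l)
    (A : Matrix (Fin l) (Fin l) ℝ) (B : Matrix (Fin l) (Fin n) ℝ)
    (D : Matrix (Fin n) (Fin n) ℝ)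
    (hH : (Matrix.fromBlocks A B Bᵀ D).PosDef)
    (hS : (A - B * D⁻¹ * Bᵀ).IsHermitian) :
    (⨆ i, hS.eigenvalues i) / (⨅ i, hS.eigenvalues i)
      ≤ (⨆ i, hH.1.eigenvalues i) / (⨅ i, hH.1.eigenvalues i) := by
  have : Nonempty (Fin l) := Fin.pos_iff_nonempty.mp hl
  -- over `ℝ`, `Bᴴ` unfolds to `Bᵀ`
  exact conditionNumber_schurComplement_le hH hS

/-- for a symmetric positive definite block matrix
H = [[A,B],[Bᵀ,D]], the condition number of the Schur complement
S = A − B D⁻¹ Bᵀ is at most that of H: κ(S) ≤ κ(H), where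
κ(M) = λ_max(M)/λ_min(M). -/
theorem stmt3 {l n : ℕ} (hl : 0 < l) (hn : 0 < n)
    (A : Matrix (Fin l) (Fin l) ℝ) (B : Matrix (Fin l) (Fin n) ℝ)
    (D : Matrix (Fin n) (Fin n) ℝ)
    (hH : (Matrix.fromBlocks A B Bᵀ D).PosDef)
    (hS : (A - B * D⁻¹ * Bᵀ).IsHermitian) :
    (⨆ i, hS.eigenvalues i) / (⨅ i, hS.eigenvalues i)
      ≤ (⨆ i, hH.1.eigenvalues i) / (⨅ i, hH.1.eigenvalues i) :=
  stmt3_general hl A B D hH hS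
end

section
/- The eigenvalues of the Schur complement S = A − B D^{-1} Bᵀ of a symmetric positive definite block matrix H = [[A, B],[Bᵀ, D]] interlace the eigenvalues of H: if λ₁ ≥ … ≥ λ_{ℓ+n} are the eigenvalues of H and μ₁ ≥ … ≥ μ_ℓ those of S, then λ_{i+n} ≤ μ_i ≤ λ_i for all i = 1,…,ℓ. -/
/-! Both inequalities are the Courant–Fischer dimension count, or its mirror image: if the
quadratic form of `H` is `≥ a‖z‖²` on a subspace `V` and `dim V` plus the number of eigenvalues
of `H` that are `≤ b` exceeds `ℓ + n`, then `V` meets the span of those eigenvectors and `a ≤ b`.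

For `μ_i ≤ λ_i`, take `V = {(x, 0)}` with `x` in the span of the top `i` eigenvectors of `S`:
there `zᵀHz = xᵀAx ≥ xᵀSx` because `B D⁻¹ Bᵀ ≥ 0`. For `λ_{i+n} ≤ μ_i`, take the graph
`V = {(x, -D⁻¹Bᵀx)}` over the bottom `ℓ - i + 1` eigenvectors of `S`: completing the square
gives `zᵀHz = xᵀSx` there, while `‖z‖ ≥ ‖x‖` and `S ≥ 0` make `μ_i‖x‖² ≤ μ_i‖z‖²`. -/

open Matrix Module Finset

lemma Submodule.exists_mem_mem_ne_zero_of_lt_finrank_add {K V : Type*} [DivisionRing K]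
    [AddCommGroup V] [Module K V] [FiniteDimensional K V] {s t : Submodule K V}
    (h : finrank K V < finrank K s + finrank K t) : ∃ x ∈ s, x ∈ t ∧ x ≠ 0 := by
  contrapose! h
  exact Submodule.finrank_add_finrank_le_of_disjoint (Submodule.disjoint_def.mpr h)

lemma dotProduct_self_pos {ι : Type*} [Fintype ι] {z : ι → ℝ} (hz : z ≠ 0) : 0 < z ⬝ᵥ z :=
  (Finset.sum_nonneg fun i _ => mul_self_nonneg (z i)).lt_of_ne
    (Ne.symm (dotProduct_self_eq_zero.not.mpr hz))

namespace Matrix.IsHermitian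

variable {ι : Type*} [Fintype ι] [DecidableEq ι] {M : Matrix ι ι ℝ} (hM : M.IsHermitian)

lemma dotProduct_self_eq_sum_sq (z : ι → ℝ) :
    z ⬝ᵥ z = ∑ s, ((star (hM.eigenvectorUnitary : Matrix ι ι ℝ) *ᵥ z) s) ^ 2 := by
  set W := (hM.eigenvectorUnitary : Matrix ι ι ℝ)
  have hzW : z ᵥ* W = star W *ᵥ z := by
    rw [star_eq_conjTranspose, conjTranspose_eq_transpose_of_trivial, mulVec_transpose]
  calc z ⬝ᵥ z = z ⬝ᵥ ((W * star W) *ᵥ z) := by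
        rw [Unitary.mul_star_self_of_mem hM.eigenvectorUnitary.2, one_mulVec]
    _ = (star W *ᵥ z) ⬝ᵥ (star W *ᵥ z) := by rw [← mulVec_mulVec, dotProduct_mulVec, hzW]
    _ = _ := by simp only [dotProduct, sq]

lemma dotProduct_mulVec_eq_sum_eigenvalues_mul_sq (z : ι → ℝ) :
    z ⬝ᵥ (M *ᵥ z) =
      ∑ s, hM.eigenvalues s * ((star (hM.eigenvectorUnitary : Matrix ι ι ℝ) *ᵥ z) s) ^ 2 := by
  set W := (hM.eigenvectorUnitary : Matrix ι ι ℝ)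
  have hzW : z ᵥ* W = star W *ᵥ z := by
    rw [star_eq_conjTranspose, conjTranspose_eq_transpose_of_trivial, mulVec_transpose]
  calc z ⬝ᵥ (M *ᵥ z) = z ⬝ᵥ ((W * diagonal hM.eigenvalues * star W) *ᵥ z) := by
        conv_lhs => rw [hM.spectral_theorem, Unitary.conjStarAlgAut_apply]
        rfl
    _ = (star W *ᵥ z) ⬝ᵥ (diagonal hM.eigenvalues *ᵥ (star W *ᵥ z)) := by
        rw [← mulVec_mulVec, ← mulVec_mulVec, dotProduct_mulVec, hzW]
    _ = _ := by
        simp only [dotProduct, mulVec_diagonal]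
        exact Finset.sum_congr rfl fun s _ => by ring

noncomputable def eigenvectorSpan (T : Finset ι) : Submodule ℝ (ι → ℝ) :=
  Submodule.span ℝ (Set.range fun s : T => ⇑(hM.eigenvectorBasis s))

lemma finrank_eigenvectorSpan (T : Finset ι) : finrank ℝ (hM.eigenvectorSpan T) = #T := by
  rw [eigenvectorSpan, finrank_span_eq_card, Fintype.card_coe]
  simp_rw [← eigenvectorUnitary_col_eq]
  exact (linearIndependent_cols_iff_isUnit.mpr Unitary.isUnit_coe).comp _ Subtype.val_injective

lemma star_eigenvectorUnitary_mulVec_apply_eq_zero {T : Finset ι} {z : ι → ℝ}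
    (hz : z ∈ hM.eigenvectorSpan T) {s : ι} (hs : s ∉ T) :
    (star (hM.eigenvectorUnitary : Matrix ι ι ℝ) *ᵥ z) s = 0 := by
  induction hz using Submodule.span_induction with
  | mem x hx =>
    obtain ⟨⟨j, hj⟩, rfl⟩ := hx
    rw [star_eigenvectorUnitary_mulVec, Pi.single_apply, if_neg (by rintro rfl; exact hs hj)]
  | zero => simp
  | add x y _ _ hx hy => simp [mulVec_add, hx, hy]
  | smul a x _ hx => simp [mulVec_smul, hx]

lemma le_dotProduct_mulVec_of_mem_eigenvectorSpan {T : Finset ι} {a : ℝ}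
    (hT : ∀ s ∈ T, a ≤ hM.eigenvalues s) {z : ι → ℝ} (hz : z ∈ hM.eigenvectorSpan T) :
    a * (z ⬝ᵥ z) ≤ z ⬝ᵥ (M *ᵥ z) := by
  rw [hM.dotProduct_self_eq_sum_sq, hM.dotProduct_mulVec_eq_sum_eigenvalues_mul_sq, mul_sum]
  refine sum_le_sum fun s _ => ?_
  by_cases hs : s ∈ T
  · exact mul_le_mul_of_nonneg_right (hT s hs) (sq_nonneg _)
  · simp [hM.star_eigenvectorUnitary_mulVec_apply_eq_zero hz hs]

lemma dotProduct_mulVec_le_of_mem_eigenvectorSpan {T : Finset ι} {b : ℝ}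
    (hT : ∀ s ∈ T, hM.eigenvalues s ≤ b) {z : ι → ℝ} (hz : z ∈ hM.eigenvectorSpan T) :
    z ⬝ᵥ (M *ᵥ z) ≤ b * (z ⬝ᵥ z) := by
  rw [hM.dotProduct_self_eq_sum_sq, hM.dotProduct_mulVec_eq_sum_eigenvalues_mul_sq, mul_sum]
  refine sum_le_sum fun s _ => ?_
  by_cases hs : s ∈ T
  · exact mul_le_mul_of_nonneg_right (hT s hs) (sq_nonneg _)
  · simp [hM.star_eigenvectorUnitary_mulVec_apply_eq_zero hz hs]

theorem le_of_forall_le_dotProduct_mulVec (V : Submodule ℝ (ι → ℝ)) {a b : ℝ}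
    (hV : ∀ z ∈ V, a * (z ⬝ᵥ z) ≤ z ⬝ᵥ (M *ᵥ z))
    (hcard : Fintype.card ι < finrank ℝ V + #{s | hM.eigenvalues s ≤ b}) : a ≤ b := by
  rw [← hM.finrank_eigenvectorSpan, ← finrank_fintype_fun_eq_card ℝ] at hcard
  obtain ⟨z, hzV, hzT, hz⟩ := Submodule.exists_mem_mem_ne_zero_of_lt_finrank_add hcard
  have hT : ∀ s ∈ ({s | hM.eigenvalues s ≤ b} : Finset ι), hM.eigenvalues s ≤ b := by simp
  have := (hV z hzV).trans (hM.dotProduct_mulVec_le_of_mem_eigenvectorSpan hT hzT)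
  exact le_of_mul_le_mul_right this (dotProduct_self_pos hz)

theorem le_of_forall_dotProduct_mulVec_le (V : Submodule ℝ (ι → ℝ)) {a b : ℝ}
    (hV : ∀ z ∈ V, z ⬝ᵥ (M *ᵥ z) ≤ b * (z ⬝ᵥ z))
    (hcard : Fintype.card ι < finrank ℝ V + #{s | a ≤ hM.eigenvalues s}) : a ≤ b := by
  rw [← hM.finrank_eigenvectorSpan, ← finrank_fintype_fun_eq_card ℝ] at hcard
  obtain ⟨z, hzV, hzT, hz⟩ := Submodule.exists_mem_mem_ne_zero_of_lt_finrank_add hcard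
  have hT : ∀ s ∈ ({s | a ≤ hM.eigenvalues s} : Finset ι), a ≤ hM.eigenvalues s := by simp
  have := (hM.le_dotProduct_mulVec_of_mem_eigenvectorSpan hT hzT).trans (hV z hzV)
  exact le_of_mul_le_mul_right this (dotProduct_self_pos hz)

end Matrix.IsHermitian

lemma Antitone.add_one_le_card_filter_le {ι α : Type*} [Fintype ι] [Preorder α] [DecidableLE α]
    {m : ℕ} {f : Fin m → α} (hf : Antitone f) (e : ι ≃ Fin m) (k : Fin m) :
    (k : ℕ) + 1 ≤ #{s | f k ≤ f (e s)} := by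
  rw [← Fin.card_Iic]
  refine card_le_card_of_injOn e.symm (fun j hj => ?_) e.symm.injective.injOn
  simpa using hf (mem_Iic.mp hj)

lemma Antitone.sub_le_card_filter_ge {ι α : Type*} [Fintype ι] [Preorder α] [DecidableLE α]
    {m : ℕ} {f : Fin m → α} (hf : Antitone f) (e : ι ≃ Fin m) (k : Fin m) :
    m - k ≤ #{s | f (e s) ≤ f k} := by
  rw [← Fin.card_Ici]
  refine card_le_card_of_injOn e.symm (fun j hj => ?_) e.symm.injective.injOn
  simpa using hf (mem_Ici.mp hj)

namespace Matrix

variable {m n : Type*} [Fintype m]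

noncomputable def graphLin (C : Matrix n m ℝ) : (m → ℝ) →ₗ[ℝ] (m ⊕ n → ℝ) where
  toFun x := Sum.elim x (C *ᵥ x)
  map_add' x y := by ext (i | i) <;> simp [mulVec_add]
  map_smul' r x := by ext (i | i) <;> simp [mulVec_smul]

lemma graphLin_apply (C : Matrix n m ℝ) (x : m → ℝ) : graphLin C x = Sum.elim x (C *ᵥ x) := rfl

lemma finrank_map_graphLin (C : Matrix n m ℝ) (V : Submodule ℝ (m → ℝ)) :
    finrank ℝ (V.map (graphLin C)) = finrank ℝ V :=
  (Submodule.equivMapOfInjective _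
    (fun _ _ h => funext fun j => congrFun h (Sum.inl j)) V).finrank_eq.symm

variable [Fintype n]

lemma dotProduct_self_le_graphLin (C : Matrix n m ℝ) (x : m → ℝ) :
    x ⬝ᵥ x ≤ graphLin C x ⬝ᵥ graphLin C x := by
  rw [graphLin_apply, sumElim_dotProduct_sumElim]
  exact le_add_of_nonneg_right (Finset.sum_nonneg fun i _ => mul_self_nonneg _)

lemma graphLin_zero_dotProduct_fromBlocks_mulVec (A : Matrix m m ℝ) (B : Matrix m n ℝ)
    (C : Matrix n m ℝ) (D : Matrix n n ℝ) (x : m → ℝ) :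
    graphLin 0 x ⬝ᵥ (fromBlocks A B C D *ᵥ graphLin 0 x) = x ⬝ᵥ (A *ᵥ x) := by
  simp [graphLin_apply, fromBlocks_mulVec, sumElim_dotProduct_sumElim]

variable [DecidableEq n]

lemma graphLin_dotProduct_fromBlocks_mulVec_eq_schur (A : Matrix m m ℝ) (B : Matrix m n ℝ)
    {D : Matrix n n ℝ} (hD : D.IsHermitian) [Invertible D] (x : m → ℝ) :
    graphLin (-(D⁻¹ * Bᵀ)) x ⬝ᵥ (fromBlocks A B Bᵀ D *ᵥ graphLin (-(D⁻¹ * Bᵀ)) x) =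
      x ⬝ᵥ ((A - B * D⁻¹ * Bᵀ) *ᵥ x) := by
  have := schur_complement_eq₂₂ A B x (-(D⁻¹ * Bᵀ) *ᵥ x) hD
  simp only [conjTranspose_eq_transpose_of_trivial, star_trivial, neg_mulVec, add_neg_cancel,
    zero_vecMul, zero_dotProduct, zero_add] at this
  rwa [graphLin_apply, neg_mulVec, dotProduct_mulVec, dotProduct_mulVec]

variable [DecidableEq m]

theorem schur_le_fromBlocks_of_card_lt {A : Matrix m m ℝ} {B : Matrix m n ℝ}
    {D : Matrix n n ℝ} (hH : (fromBlocks A B Bᵀ D).IsHermitian) (hD : D.PosSemidef)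
    (hS : (A - B * D⁻¹ * Bᵀ).IsHermitian) {a b : ℝ}
    (hcard : Fintype.card (m ⊕ n) < #{j | a ≤ hS.eigenvalues j} + #{s | hH.eigenvalues s ≤ b}) :
    a ≤ b := by
  refine hH.le_of_forall_le_dotProduct_mulVec
    ((hS.eigenvectorSpan {j | a ≤ hS.eigenvalues j}).map (graphLin 0)) ?_
    (by rwa [finrank_map_graphLin, IsHermitian.finrank_eigenvectorSpan])
  rintro _ ⟨x, hx, rfl⟩
  have hBDB : 0 ≤ x ⬝ᵥ ((B * D⁻¹ * Bᵀ) *ᵥ x) := by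
    simpa using (hD.inv.mul_mul_conjTranspose_same B).dotProduct_mulVec_nonneg x
  calc a * (graphLin 0 x ⬝ᵥ graphLin 0 x) = a * (x ⬝ᵥ x) := by
        simp [graphLin_apply, sumElim_dotProduct_sumElim]
    _ ≤ x ⬝ᵥ ((A - B * D⁻¹ * Bᵀ) *ᵥ x) :=
        hS.le_dotProduct_mulVec_of_mem_eigenvectorSpan (by simp) hx
    _ ≤ x ⬝ᵥ (A *ᵥ x) := by rw [sub_mulVec, dotProduct_sub]; linarith
    _ = _ := (graphLin_zero_dotProduct_fromBlocks_mulVec A B Bᵀ D x).symm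

theorem fromBlocks_le_schur_of_card_lt {A : Matrix m m ℝ} {B : Matrix m n ℝ}
    {D : Matrix n n ℝ} (hH : (fromBlocks A B Bᵀ D).PosSemidef) (hD : D.PosDef)
    (hS : (A - B * D⁻¹ * Bᵀ).IsHermitian) {a b : ℝ}
    (hcard : Fintype.card (m ⊕ n) < #{s | a ≤ hH.1.eigenvalues s} + #{j | hS.eigenvalues j ≤ b}) :
    a ≤ b := by
  have := hD.isUnit.invertible
  have hSpsd : (A - B * D⁻¹ * Bᵀ).PosSemidef := by
    simpa using (PosDef.fromBlocks₂₂ A B hD).mp (by simpa using hH)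
  obtain ⟨j, hj⟩ : ∃ j, hS.eigenvalues j ≤ b := by
    by_contra! h
    simp only [filter_false_of_mem fun j _ => not_le.mpr (h j), card_empty, add_zero] at hcard
    exact hcard.not_ge (card_le_univ _)
  refine hH.1.le_of_forall_dotProduct_mulVec_le
    ((hS.eigenvectorSpan {j | hS.eigenvalues j ≤ b}).map (graphLin (-(D⁻¹ * Bᵀ)))) ?_
    (by rwa [finrank_map_graphLin, IsHermitian.finrank_eigenvectorSpan, add_comm])
  rintro _ ⟨x, hx, rfl⟩
  calc _ = x ⬝ᵥ ((A - B * D⁻¹ * Bᵀ) *ᵥ x) :=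
        graphLin_dotProduct_fromBlocks_mulVec_eq_schur A B hD.1 x
    _ ≤ b * (x ⬝ᵥ x) := hS.dotProduct_mulVec_le_of_mem_eigenvectorSpan (by simp) hx
    _ ≤ _ := mul_le_mul_of_nonneg_left (dotProduct_self_le_graphLin _ x)
        ((hSpsd.eigenvalues_nonneg j).trans hj)

end Matrix

theorem stmt4_general {l n : ℕ}
    (A : Matrix (Fin l) (Fin l) ℝ) (B : Matrix (Fin l) (Fin n) ℝ)
    (D : Matrix (Fin n) (Fin n) ℝ)
    (hH : (Matrix.fromBlocks A B Bᵀ D).PosDef)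
    (hS : (A - B * D⁻¹ * Bᵀ).IsHermitian)
    (lam : Fin (l + n) → ℝ) (hlamA : Antitone lam)
    (e : (Fin l ⊕ Fin n) ≃ Fin (l + n)) (hlam : hH.1.eigenvalues = lam ∘ e)
    (mu : Fin l → ℝ) (hmuA : Antitone mu)
    (e' : Fin l ≃ Fin l) (hmu : hS.eigenvalues = mu ∘ e') :
    ∀ i : Fin l, lam (i.addNat n) ≤ mu i ∧ mu i ≤ lam (Fin.castAdd n i) := by
  intro i
  have hD : D.PosDef := hH.submatrix Sum.inr_injective
  have hcard : Fintype.card (Fin l ⊕ Fin n) = l + n := by simp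
  constructor
  · refine fromBlocks_le_schur_of_card_lt hH.posSemidef hD hS ?_
    have := hlamA.add_one_le_card_filter_le e (i.addNat n)
    have := hmuA.sub_le_card_filter_ge e' i
    rw [Fin.val_addNat] at *
    simp only [hlam, hmu, hcard, Function.comp_apply]
    omega
  · refine schur_le_fromBlocks_of_card_lt hH.1 hD.posSemidef hS ?_
    have := hmuA.add_one_le_card_filter_le e' i
    have := hlamA.sub_le_card_filter_ge e (Fin.castAdd n i)
    rw [Fin.val_castAdd] at *
    simp only [hlam, hmu, hcard, Function.comp_apply]
    omega

/-- eigenvalue interlacing for the Schur complement. If λ is a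
decreasing enumeration of the eigenvalues of the symmetric positive definite
block matrix H = [[A,B],[Bᵀ,D]] and μ a decreasing enumeration of the
eigenvalues of S = A − B D⁻¹ Bᵀ, then λ_{i+n} ≤ μ_i ≤ λ_i for all i. -/
theorem stmt4 {l n : ℕ}
    (A : Matrix (Fin l) (Fin l) ℝ) (B : Matrix (Fin l) (Fin n) ℝ)
    (D : Matrix (Fin n) (Fin n) ℝ)
    (hH : (Matrix.fromBlocks A B Bᵀ D).PosDef)
    (hD : IsUnit D.det)
    (hS : (A - B * D⁻¹ * Bᵀ).IsHermitian)
    (lam : Fin (l + n) → ℝ) (hlamA : Antitone lam)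
    (e : (Fin l ⊕ Fin n) ≃ Fin (l + n)) (hlam : hH.1.eigenvalues = lam ∘ e)
    (mu : Fin l → ℝ) (hmuA : Antitone mu)
    (e' : Fin l ≃ Fin l) (hmu : hS.eigenvalues = mu ∘ e') :
    ∀ i : Fin l, lam (i.addNat n) ≤ mu i ∧ mu i ≤ lam (Fin.castAdd n i) :=
  stmt4_general A B D hH hS lam hlamA e hlam mu hmuA e' hmu
end

section
/- Inexact gradient descent on a strongly convex function: Let F : ℝ^ℓ → ℝ be μ-strongly convex with L-Lipschitz continuous gradient and minimizer ā. Consider the iteration a^{k+1} = a^k − (1/L)(∇F(a^k) + e_k) with error ‖e_k‖ ≤ Cε_k. Then F(a^{k+1}) − F(ā) ≤ (1 − μ/L)(F(a^k) − F(ā)) + C²ε_k²/(2L). -/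
/-!
The step has length `1/L`, so the descent lemma for an `L`-smooth function gives
`F a⁺ ≤ F a - ‖∇F a‖² / (2L) + ‖e‖² / (2L)`: the cross terms `⟪∇F a, e⟫` cancel exactly.
Minimising the strong-convexity lower bound `F a + ⟪∇F a, d⟫ + μ/2 ‖d‖²` over `d` gives the
Polyak–Łojasiewicz inequality `2μ (F a - F ā) ≤ ‖∇F a‖²`, which turns the decrease
`‖∇F a‖² / (2L)` into the contraction factor `1 - μ/L`.
-/

open Set
open scoped RealInnerProductSpace

variable {E : Type*} [NormedAddCommGroup E] [InnerProductSpace ℝ E] [CompleteSpace E]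
  {f : E → ℝ} {f' : E → E} {g x : E} {m L : ℝ}

lemma HasGradientAt.hasDerivAt_comp_add_smul {v : E} {t : ℝ}
    (h : HasGradientAt f g (x + t • v)) :
    HasDerivAt (fun s : ℝ => f (x + s • v)) ⟪g, v⟫ t := by
  have hline : HasDerivAt (fun s : ℝ => x + s • v) v t := by
    simpa using ((hasDerivAt_id t).smul_const v).const_add x
  simpa [Function.comp_def] using h.hasFDerivAt.comp_hasDerivAt t hline

lemma ConvexOn.add_inner_le_of_hasGradientAt (hf : ConvexOn ℝ univ f)
    (h : HasGradientAt f g x) (y : E) :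
    f x + ⟪g, y - x⟫ ≤ f y := by
  have hline : ConvexOn ℝ univ fun t : ℝ => f (x + t • (y - x)) := by
    simpa [Function.comp_def, AffineMap.lineMap_apply, add_comm] using
      hf.comp_affineMap (AffineMap.lineMap x y : ℝ →ᵃ[ℝ] E)
  have hderiv := (show HasGradientAt f g (x + (0 : ℝ) • (y - x)) by simpa using h)
    |>.hasDerivAt_comp_add_smul
  have := hline.le_slope_of_hasDerivAt (mem_univ 0) (mem_univ 1) one_pos hderiv
  simp only [slope_def_field, zero_smul, add_zero, one_smul, add_sub_cancel, sub_zero,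
    div_one] at this
  linarith

lemma StrongConvexOn.add_inner_add_le_of_hasGradientAt (hf : StrongConvexOn univ m f)
    (h : HasGradientAt f g x) (y : E) :
    f x + ⟪g, y - x⟫ + m / 2 * ‖y - x‖ ^ 2 ≤ f y := by
  have hgrad : HasGradientAt (fun z => f z - m / 2 * ‖z‖ ^ 2) (g - m • x) x := by
    rw [hasGradientAt_iff_hasFDerivAt]
    refine (h.hasFDerivAt.sub
      ((hasStrictFDerivAt_norm_sq x).hasFDerivAt.const_mul (m / 2))).congr_fderiv ?_
    ext v
    simp only [sub_apply, InnerProductSpace.toDual_apply_apply,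
      smul_apply, coe_innerSL_apply, nsmul_eq_mul, smul_eq_mul, map_sub,
      map_smul, sub_right_inj]
    ring
  have := (strongConvexOn_iff_convex.mp hf).add_inner_le_of_hasGradientAt hgrad y
  have hy : ‖y‖ ^ 2 = ‖x‖ ^ 2 + 2 * ⟪x, y - x⟫ + ‖y - x‖ ^ 2 := by
    simpa using norm_add_sq_real x (y - x)
  rw [inner_sub_left, real_inner_smul_left, hy] at this
  linarith

lemma StrongConvexOn.polyak_lojasiewicz (hm : 0 ≤ m) (hf : StrongConvexOn univ m f)
    (h : HasGradientAt f g x) (y : E) :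
    2 * m * (f x - f y) ≤ ‖g‖ ^ 2 := by
  have hlower := hf.add_inner_add_le_of_hasGradientAt h y
  have hcs : -(‖g‖ * ‖y - x‖) ≤ ⟪g, y - x⟫ := neg_le_of_abs_le (abs_real_inner_le_norm _ _)
  -- the quadratic `m/2 r² - ‖g‖ r` is minimal at `r = ‖g‖ / m`
  nlinarith [sq_nonneg (m * ‖y - x‖ - ‖g‖)]

lemma image_add_le_of_lipschitz_gradient (hf : ∀ x, HasGradientAt f (f' x) x)
    (hf' : ∀ x y, ‖f' x - f' y‖ ≤ L * ‖x - y‖) (x v : E) :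
    f (x + v) ≤ f x + ⟪f' x, v⟫ + L / 2 * ‖v‖ ^ 2 := by
  -- `φ' ≤ 0` on `t ≥ 0` by the Lipschitz bound, so `φ 1 ≤ φ 0`.
  set φ : ℝ → ℝ := fun t => f (x + t • v) - t * ⟪f' x, v⟫ - L / 2 * t ^ 2 * ‖v‖ ^ 2
  have hφ : ∀ t, HasDerivAt φ (⟪f' (x + t • v), v⟫ - ⟪f' x, v⟫ - L * t * ‖v‖ ^ 2) t := by
    intro t
    refine ((((hf (x + t • v)).hasDerivAt_comp_add_smul).sub
      ((hasDerivAt_id t).mul_const ⟪f' x, v⟫)).sub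
      (((hasDerivAt_pow 2 t).const_mul (L / 2)).mul_const (‖v‖ ^ 2))).congr_deriv ?_
    simp only [one_mul, Nat.cast_ofNat]
    ring
  have hφ_nonpos : ∀ t ∈ interior (Ici (0 : ℝ)),
      ⟪f' (x + t • v), v⟫ - ⟪f' x, v⟫ - L * t * ‖v‖ ^ 2 ≤ 0 := by
    intro t ht
    rw [interior_Ici, mem_Ioi] at ht
    have hlip : ‖f' (x + t • v) - f' x‖ ≤ L * (t * ‖v‖) := by
      simpa [norm_smul, abs_of_pos ht] using hf' (x + t • v) x
    have := (real_inner_le_norm (f' (x + t • v) - f' x) v).trans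
      (mul_le_mul_of_nonneg_right hlip (norm_nonneg v))
    rw [inner_sub_left] at this
    nlinarith
  have hanti : AntitoneOn φ (Ici 0) :=
    antitoneOn_of_hasDerivWithinAt_nonpos (convex_Ici 0)
      (fun t _ => (hφ t).continuousAt.continuousWithinAt)
      (fun t _ => (hφ t).hasDerivWithinAt) hφ_nonpos
  have := hanti self_mem_Ici (mem_Ici.mpr zero_le_one) zero_le_one
  simp only [φ, zero_smul, one_smul, add_zero, zero_mul, one_mul, sub_zero, mul_one,
    one_pow, ne_eq, OfNat.ofNat_ne_zero, not_false_eq_true, zero_pow, mul_zero] at this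
  linarith

lemma image_inexact_gradient_step_le (hL : L ≠ 0) (hf : ∀ x, HasGradientAt f (f' x) x)
    (hf' : ∀ x y, ‖f' x - f' y‖ ≤ L * ‖x - y‖) (x e : E) :
    f (x - (1 / L) • (f' x + e)) ≤ f x - ‖f' x‖ ^ 2 / (2 * L) + ‖e‖ ^ 2 / (2 * L) := by
  have h := image_add_le_of_lipschitz_gradient hf hf' x (-((1 / L) • (f' x + e)))
  rw [← sub_eq_add_neg, inner_neg_right, real_inner_smul_right, inner_add_right,
    real_inner_self_eq_norm_sq, norm_neg, norm_smul, mul_pow, Real.norm_eq_abs, sq_abs,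
    norm_add_sq_real] at h
  convert h using 1
  field_simp
  ring

theorem stmt8_general {l : ℕ}
    (F : EuclideanSpace ℝ (Fin l) → ℝ) (μ L C ε : ℝ)
    (hμ : 0 < μ) (hμL : μ ≤ L)
    (hdiff : Differentiable ℝ F)
    (hsc : StrongConvexOn univ μ F)
    (hLip : ∀ x y, ‖gradient F x - gradient F y‖ ≤ L * ‖x - y‖)
    (abar : EuclideanSpace ℝ (Fin l))
    (a e : EuclideanSpace ℝ (Fin l)) (he : ‖e‖ ≤ C * ε) :
    F (a - (1/L) • (gradient F a + e)) - F abar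
      ≤ (1 - μ/L) * (F a - F abar) + C^2 * ε^2 / (2*L) := by
  have hL : 0 < L := hμ.trans_le hμL
  have hgrad : ∀ x, HasGradientAt F (gradient F x) x := fun x => (hdiff x).hasGradientAt
  have hstep := image_inexact_gradient_step_le hL.ne' hgrad hLip a e
  have hPL : μ / L * (F a - F abar) ≤ ‖gradient F a‖ ^ 2 / (2 * L) := by
    calc μ / L * (F a - F abar) = 2 * μ * (F a - F abar) / (2 * L) := by field_simp
      _ ≤ ‖gradient F a‖ ^ 2 / (2 * L) := by
        gcongr
        exact hsc.polyak_lojasiewicz hμ.le (hgrad a) abar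
  have herr : ‖e‖ ^ 2 / (2 * L) ≤ C ^ 2 * ε ^ 2 / (2 * L) := by
    gcongr
    rw [← mul_pow]
    exact pow_le_pow_left₀ (norm_nonneg e) he 2
  linarith

/-- inexact gradient descent on a μ-strongly convex function F with
L-Lipschitz gradient and minimizer ā. One step a⁺ = a − (1/L)(∇F(a) + e) with
‖e‖ ≤ Cε satisfies F(a⁺) − F(ā) ≤ (1 − μ/L)(F(a) − F(ā)) + C²ε²/(2L). -/
theorem stmt8 {l : ℕ}
    (F : EuclideanSpace ℝ (Fin l) → ℝ) (μ L C ε : ℝ)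
    (hμ : 0 < μ) (hμL : μ ≤ L)
    (hdiff : Differentiable ℝ F)
    (hsc : StrongConvexOn univ μ F)
    (hLip : ∀ x y, ‖gradient F x - gradient F y‖ ≤ L * ‖x - y‖)
    (abar : EuclideanSpace ℝ (Fin l)) (hmin : ∀ x, F abar ≤ F x)
    (a e : EuclideanSpace ℝ (Fin l)) (he : ‖e‖ ≤ C * ε) :
    F (a - (1/L) • (gradient F a + e)) - F abar
      ≤ (1 - μ/L) * (F a - F abar) + C^2 * ε^2 / (2*L) :=
  stmt8_general F μ L C ε hμ hμL hdiff hsc hLip abar a e he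
end
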